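/- arXiv:1810.12489 — 3 statements merged into one kernel-verified Lean document; each statement's English description precedes it below -/
import Mathlib

section
/- Let G be a group with finite generating set S, and let h : G → ℤ be a group homomorphism such that for every s ∈ S, h(s) ∈ {1, -1, n-1, 1-n} for a fixed integer n ≥ 3. Then for any f ∈ G, writing h(f) = q(n-1) + r with 0 ≤ |r| < (n-1)/2, the word length of f with respect to S is at least |q| + |r|. -/
/-! Since `h` is a homomorphism, `h f` is the sum of the values of `h` on the letters of any word
for `f`; collecting the letters of value `±(n - 1)` and `±1` writes `h f = A (n - 1) + B` with
`|A| + |B|` at most the length of the word. Among all such representations of an integer, the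
one with `2|r| < n - 1` minimises `|A| + |B|`: shifting `A` by `k ≠ 0` changes `B` by `k (n - 1)`,
which costs more than the `|k|` it can save. -/

theorem abs_add_abs_le_of_mul_add_eq {m q r A B : ℤ} (hr : 2 * |r| < m)
    (h : q * m + r = A * m + B) : |q| + |r| ≤ |A| + |B| := by
  obtain rfl | hk := eq_or_ne q A
  · have : B = r := by linarith
    rw [this]
  have hq : |q| ≤ |A| + |q - A| := by simpa using abs_add_le A (q - A)
  have hB : |q - A| * m - |r| ≤ |B| := by
    have hm : |m| = m := abs_of_pos (by linarith [abs_nonneg r])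
    have : |(q - A) * m| ≤ |B| + |r| := by
      calc |(q - A) * m| = |B - r| := by congr 1; linarith
        _ ≤ |B| + |r| := abs_sub B r
    rw [abs_mul, hm] at this
    linarith
  have : 1 ≤ |q - A| := Int.one_le_abs (sub_ne_zero.mpr hk)
  nlinarith [abs_nonneg r]

theorem List.exists_sum_eq_mul_add_abs_le_length {m : ℤ} (l : List ℤ)
    (hl : ∀ x ∈ l, x = 1 ∨ x = -1 ∨ x = m ∨ x = -m) :
    ∃ A B : ℤ, l.sum = A * m + B ∧ |A| + |B| ≤ l.length := by
  induction l with
  | nil => exact ⟨0, 0, by simp, by simp⟩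
  | cons x t ih =>
    obtain ⟨A, B, hsum, hlen⟩ := ih fun y hy => hl y (List.mem_cons_of_mem x hy)
    simp only [List.sum_cons, List.length_cons, Nat.cast_succ, hsum]
    rcases hl x List.mem_cons_self with rfl | rfl | rfl | rfl
    · exact ⟨A, B + 1, by ring, by linarith [abs_add_le B 1, abs_one (α := ℤ)]⟩
    · exact ⟨A, B - 1, by ring, by linarith [abs_sub B 1, abs_one (α := ℤ)]⟩
    · exact ⟨A + 1, B, by ring, by linarith [abs_add_le A 1, abs_one (α := ℤ)]⟩
    · exact ⟨A - 1, B, by ring, by linarith [abs_sub A 1, abs_one (α := ℤ)]⟩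

theorem stmt_1_general {G : Type*} [Group G] (S : Finset G) (n : ℤ)
    (h : G → ℤ) (hhom : ∀ x y : G, h (x * y) = h x + h y)
    (hS : ∀ s ∈ S, h s = 1 ∨ h s = -1 ∨ h s = n - 1 ∨ h s = 1 - n)
    (f : G) (q r : ℤ) (hf : h f = q * (n - 1) + r) (hr : 2 * |r| < n - 1)
    (L : List G) (hL : ∀ x ∈ L, x ∈ S ∨ x⁻¹ ∈ S) (hprod : L.prod = f) :
    |q| + |r| ≤ (L.length : ℤ) := by
  let φ : G →* Multiplicative ℤ :=
    MonoidHom.mk' (fun x => Multiplicative.ofAdd (h x)) fun x y => congrArg _ (hhom x y)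
  have h_inv (x : G) : h x⁻¹ = -h x := map_inv φ x
  have h_prod : h f = (L.map h).sum := hprod ▸ map_list_prod φ L
  have h_letters : ∀ y ∈ L.map h, y = 1 ∨ y = -1 ∨ y = n - 1 ∨ y = -(n - 1) := by
    simp only [List.forall_mem_map]
    intro x hx
    rcases hL x hx with hx | hx
    · have := hS x hx; omega
    · have := hS _ hx; rw [h_inv] at this; omega
  obtain ⟨A, B, h_sum, h_len⟩ := (L.map h).exists_sum_eq_mul_add_abs_le_length h_letters
  calc |q| + |r| ≤ |A| + |B| :=
        abs_add_abs_le_of_mul_add_eq hr (by rw [← hf, h_prod, h_sum])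
    _ ≤ L.length := by simpa using h_len

theorem stmt_1 {G : Type*} [Group G] (S : Finset G) (n : ℤ) (hn : 3 ≤ n)
    (h : G → ℤ) (hhom : ∀ x y : G, h (x * y) = h x + h y)
    (hS : ∀ s ∈ S, h s = 1 ∨ h s = -1 ∨ h s = n - 1 ∨ h s = 1 - n)
    (f : G) (q r : ℤ) (hf : h f = q * (n - 1) + r) (hr : 2 * |r| < n - 1)
    (L : List G) (hL : ∀ x ∈ L, x ∈ S ∨ x⁻¹ ∈ S) (hprod : L.prod = f) :
    |q| + |r| ≤ (L.length : ℤ) :=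
  stmt_1_general S n h hhom hS f q r hf hr L hL hprod
end

section
/- The real number λ = √13 + 2√(2√13 + 7) + 4 is an eigenvalue of the 5×5 matrix A = [[3,2,0,0,2],[6,3,6,4,0],[4,2,3,2,0],[12,8,6,3,6],[6,4,4,2,3]], i.e., det(A - λI) = 0. -/
/-! λ = 4 + s + 2t with s = √13 and t = √(2s + 7), and A has an explicit eigenvector for λ
whose entries are polynomials in s and t. Checking A v = λ v uses only s² = 13 and t² = 2s + 7,
so every choice of signs of the two square roots gives an eigenvalue; a nonzero eigenvector
makes A - λI singular. -/

/- The train-track transition matrix A, with real entries. -/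
def trainTrackMatrixR : Matrix (Fin 5) (Fin 5) ℝ :=
  !![3, 2, 0, 0, 2;
     6, 3, 6, 4, 0;
     4, 2, 3, 2, 0;
     12, 8, 6, 3, 6;
     6, 4, 4, 2, 3]

open Matrix

theorem det_sub_smul_one_eq_zero_of_mulVec_eq_smul {n R : Type*} [Fintype n] [DecidableEq n]
    [CommRing R] [IsDomain R] {M : Matrix n n R} {v : n → R} {μ : R} (hv : v ≠ 0)
    (h : M *ᵥ v = μ • v) : (M - μ • (1 : Matrix n n R)).det = 0 := by
  rw [← exists_mulVec_eq_zero_iff]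
  exact ⟨v, hv, by rw [sub_mulVec, smul_mulVec, one_mulVec, h, sub_self]⟩

def trainTrackEigenvector (s t : ℝ) : Fin 5 → ℝ :=
  ![3 + s - 5 * t + s * t, -5 - s + 7 * t - s * t, 1 + s + 3 * t - s * t, 1 - s - t + s * t, 4]

theorem trainTrackEigenvector_ne_zero (s t : ℝ) : trainTrackEigenvector s t ≠ 0 := fun h ↦ by
  simpa [trainTrackEigenvector] using congrFun h 4

theorem trainTrackMatrixR_mulVec_eigenvector {s t : ℝ} (hs : s ^ 2 = 13)
    (ht : t ^ 2 = 2 * s + 7) :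
    trainTrackMatrixR *ᵥ trainTrackEigenvector s t =
      (s + 2 * t + 4) • trainTrackEigenvector s t := by
  ext i
  fin_cases i <;> simp [trainTrackMatrixR, trainTrackEigenvector]
  · linear_combination (10 - 2 * s) * ht + (-5 - t) * hs
  · linear_combination (-14 + 2 * s) * ht + (5 + t) * hs
  · linear_combination (-6 + 2 * s) * ht + (3 + t) * hs
  · linear_combination (2 - 2 * s) * ht + (-3 - t) * hs
  · ring

theorem stmt_10 :
    (trainTrackMatrixR -
        (Real.sqrt 13 + 2 * Real.sqrt (2 * Real.sqrt 13 + 7) + 4) •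
          (1 : Matrix (Fin 5) (Fin 5) ℝ)).det = 0 := by
  have hs : Real.sqrt 13 ^ 2 = 13 := Real.sq_sqrt (by norm_num)
  have ht : Real.sqrt (2 * Real.sqrt 13 + 7) ^ 2 = 2 * Real.sqrt 13 + 7 :=
    Real.sq_sqrt (by positivity)
  exact det_sub_smul_one_eq_zero_of_mulVec_eq_smul (trainTrackEigenvector_ne_zero _ _)
    (trainTrackMatrixR_mulVec_eigenvector hs ht)
end

section
/- Let n ≥ 3 and k ≥ 1 with m_k = ∑_{i=0}^k n^i. For any integer m with 5m < k, writing m_k - 5m = q(n-1) + r with 2|r| < n-1, we have |q| + |r| > (m_k - k)/(n-1). In particular the minimal value of |q|+|r| over representations of m_k - 5m exceeds that of m_k - k, which is exactly divisible by n-1. -/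
lemma mul_add_le_abs_add_abs_mul {R : Type*} [Ring R] [LinearOrder R] [IsStrictOrderedRing R]
    {q r d : R} (hd : 1 ≤ d) : q * d + r ≤ (|q| + |r|) * d := by
  rw [add_mul]
  exact add_le_add (mul_le_mul_of_nonneg_right (le_abs_self q) (zero_le_one.trans hd))
    ((le_abs_self r).trans (le_mul_of_one_le_right (abs_nonneg r) hd))

theorem stmt_14_general (n : ℤ) (k : ℕ) (m q r : ℤ)
    (hm : 5 * m < (k : ℤ))
    (hqr : (∑ i ∈ Finset.range (k + 1), n ^ i) - 5 * m = q * (n - 1) + r)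
    (hr : 2 * |r| < n - 1) :
    ((∑ i ∈ Finset.range (k + 1), n ^ i : ℤ) - k : ℝ) / ((n : ℝ) - 1) <
      ((|q| + |r| : ℤ) : ℝ) := by
  have hd : 1 ≤ n - 1 := by linarith [abs_nonneg r]
  have key : (∑ i ∈ Finset.range (k + 1), n ^ i) - k < (|q| + |r|) * (n - 1) :=
    calc (∑ i ∈ Finset.range (k + 1), n ^ i) - k
        < (∑ i ∈ Finset.range (k + 1), n ^ i) - 5 * m := by linarith
      _ = q * (n - 1) + r := hqr
      _ ≤ (|q| + |r|) * (n - 1) := mul_add_le_abs_add_abs_mul hd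
  have hd' : (0 : ℝ) < n - 1 := by exact_mod_cast zero_lt_one.trans_le hd
  rw [div_lt_iff₀ hd']
  exact_mod_cast key

theorem stmt_14 (n : ℤ) (k : ℕ) (hn : 3 ≤ n) (hk : 1 ≤ k) (m q r : ℤ)
    (hm : 5 * m < (k : ℤ))
    (hqr : (∑ i ∈ Finset.range (k + 1), n ^ i) - 5 * m = q * (n - 1) + r)
    (hr : 2 * |r| < n - 1) :
    ((∑ i ∈ Finset.range (k + 1), n ^ i : ℤ) - k : ℝ) / ((n : ℝ) - 1) <
      ((|q| + |r| : ℤ) : ℝ) :=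
  stmt_14_general n k m q r hm hqr hr
end
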